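/- Let B₄ be the presented group on generators σ₁, σ₂, σ₃ with the braid relations, and let ψ : B₄ → GL(3, ℤ[t,t⁻¹]) be a homomorphism with ψ(σᵢ) = Mᵢ. Assume the kernel K of ψ is contained in the subgroup generated by α = σ₁σ₂σ₃⁻¹σ₁σ₂⁻¹σ₁⁻¹ and β = σ₃σ₁⁻¹. If K is nontrivial, then there exists a non-identity element ω ∈ K of the form ω = θ^m · τ² · (Δτ^{i₁})(Δτ^{i₂})⋯(Δτ^{i_k}) · Δ · τ² for some m ∈ ℤ, k ≥ 0, and exponents i₁, …, i_k ∈ {1, 2, 3}, where τ = σ₁σ₂σ₃, Δ = σ₁σ₂σ₃σ₁σ₂σ₁, and θ = τ⁴. -/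

import Mathlib

open LaurentPolynomial

/-- The braid relators of `B₄` in the free group on three generators. -/
def braidRels : Set (FreeGroup (Fin 3)) :=
  { FreeGroup.of 0 * FreeGroup.of 1 * FreeGroup.of 0 *
      (FreeGroup.of 1 * FreeGroup.of 0 * FreeGroup.of 1)⁻¹,
    FreeGroup.of 1 * FreeGroup.of 2 * FreeGroup.of 1 *
      (FreeGroup.of 2 * FreeGroup.of 1 * FreeGroup.of 2)⁻¹,
    FreeGroup.of 0 * FreeGroup.of 2 * (FreeGroup.of 2 * FreeGroup.of 0)⁻¹ }

/-- The braid group `B₄`, presented on `σ₁, σ₂, σ₃` with the braid relations. -/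
abbrev B₄ : Type := PresentedGroup braidRels

/-- The standard generators `σ₁, σ₂, σ₃` of `B₄` (indexed by `Fin 3`). -/
def σ (i : Fin 3) : B₄ := PresentedGroup.of i

/-- `t` in the Laurent polynomial ring `ℤ[t,t⁻¹]`. -/
noncomputable def tt : LaurentPolynomial ℤ := T 1

/-- Reduced Burau matrix of `σ₁`. -/
noncomputable def M₁ : Matrix (Fin 3) (Fin 3) (LaurentPolynomial ℤ) :=
  !![-tt, tt, 0; 0, 1, 0; 0, 0, 1]

/-- Reduced Burau matrix of `σ₂`. -/
noncomputable def M₂ : Matrix (Fin 3) (Fin 3) (LaurentPolynomial ℤ) :=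
  !![1, 0, 0; 1, -tt, tt; 0, 0, 1]

/-- Reduced Burau matrix of `σ₃`. -/
noncomputable def M₃ : Matrix (Fin 3) (Fin 3) (LaurentPolynomial ℤ) :=
  !![1, 0, 0; 0, 1, 0; 0, 1, -tt]

/-- `α = σ₁σ₂σ₃⁻¹σ₁σ₂⁻¹σ₁⁻¹`. -/
def α : B₄ := σ 0 * σ 1 * (σ 2)⁻¹ * σ 0 * (σ 1)⁻¹ * (σ 0)⁻¹

/-- `β = σ₃σ₁⁻¹`. -/
def β : B₄ := σ 2 * (σ 0)⁻¹

/-- `τ = σ₁σ₂σ₃`. -/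
def τ : B₄ := σ 0 * σ 1 * σ 2

/-- `Δ = σ₁σ₂σ₃σ₁σ₂σ₁`. -/
def Δ : B₄ := σ 0 * σ 1 * σ 2 * σ 0 * σ 1 * σ 0

/-- `θ = τ⁴`, the full twist generating the center of `B₄`. -/
def θ : B₄ := τ ^ 4

/-!
Modulo the central element `θ = τ⁴ = Δ²`, the images `t, d` of `τ, Δ` satisfy `t⁴ = d² = 1`,
while `α ≡ t⁻¹ d t⁻¹` and `β ≡ d t⁻²`. So every element of `⟨α, β⟩`, in particular every
kernel element, is up to a power of `θ` either a power of `τ` or a reduced word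
`τ^p (Δτ^{i₁}) ⋯ (Δτ^{i_k}) Δ τ^q` with all `i_j ∈ {1, 2, 3}`. A kernel element of the first
kind is trivial, because `det ψ(τ) = -t³` has infinite order. One of the second kind is
conjugated by `τ² Δ τ^j`, with `j` chosen so that neither of the two `τ`-exponents created at
the junctions is divisible by `4`, into the required shape; as the kernel is normal, the
conjugate is again a nontrivial kernel element.

`θ` is central because conjugation by `τ` sends `σ₁ ↦ σ₂ ↦ σ₃`, and conjugation by `τ²` sends
`σ₃ ↦ σ₁`: indeed `τ² = (σ₁σ₂σ₁)(σ₂σ₃σ₂)` is a product of two Garside elements of `B₃`.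
The same factorisation gives `Δ² = θ`, since `Δ = τ (σ₁σ₂σ₁) = (σ₂σ₃σ₂) τ`.
-/

section BraidRelations

variable {M : Type*} [Monoid M] {a b : M}

theorem semiconjBy_mul_of_braid (h : a * b * a = b * a * b) : SemiconjBy (a * b) a b := by
  rw [SemiconjBy, h, mul_assoc]

theorem semiconjBy_garside_of_braid (h : a * b * a = b * a * b) :
    SemiconjBy (a * b * a) b a := by
  simp only [SemiconjBy, mul_assoc] at h ⊢
  rw [← h]

end BraidRelations

section ReducedWords

variable {G : Type*} [Group G]

def blockProd (d t : G) (L : List ℕ) : G := (L.map fun i => d * t ^ i).prod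

@[simp]
theorem blockProd_nil (d t : G) : blockProd d t [] = 1 := rfl

@[simp]
theorem blockProd_cons (d t : G) (i : ℕ) (L : List ℕ) :
    blockProd d t (i :: L) = d * t ^ i * blockProd d t L := by
  simp [blockProd]

@[simp]
theorem blockProd_append (d t : G) (L L' : List ℕ) :
    blockProd d t (L ++ L') = blockProd d t L * blockProd d t L' := by
  simp [blockProd]

theorem QuotientGroup.mk_blockProd (N : Subgroup G) [N.Normal] (d t : G) (L : List ℕ) :
    ((blockProd d t L : G) : G ⧸ N) = blockProd (d : G ⧸ N) t L := by
  induction L with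
  | nil => rfl
  | cons i L ih => simp [ih]

/-- Reduced words of the free product `ℤ/n ∗ ℤ/2`, evaluated at `t` and `d`. -/
def IsReducedWord (t d : G) (n : ℕ) (w : G) : Prop :=
  (∃ p : ℕ, w = t ^ p) ∨
    ∃ (p : ℕ) (L : List ℕ) (q : ℕ),
      (∀ i ∈ L, 0 < i ∧ i < n) ∧ w = t ^ p * blockProd d t L * d * t ^ q

namespace IsReducedWord

variable {t d w : G} {n : ℕ}

theorem one : IsReducedWord t d n 1 := Or.inl ⟨0, (pow_zero t).symm⟩

theorem mul_pow (hw : IsReducedWord t d n w) (k : ℕ) : IsReducedWord t d n (w * t ^ k) := by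
  rcases hw with ⟨p, rfl⟩ | ⟨p, L, q, hL, rfl⟩
  · exact Or.inl ⟨p + k, (pow_add t p k).symm⟩
  · exact Or.inr ⟨p, L, q + k, hL, by rw [pow_add, mul_assoc _ (t ^ q)]⟩

theorem mul_of_sq_eq_one (hn : 0 < n) (ht : t ^ n = 1) (hd : d ^ 2 = 1)
    (hw : IsReducedWord t d n w) : IsReducedWord t d n (w * d) := by
  have hdd : d * d = 1 := by rw [← sq, hd]
  rcases hw with ⟨p, rfl⟩ | ⟨p, L, q, hL, rfl⟩
  · exact Or.inr ⟨p, [], 0, by simp, by simp⟩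
  rw [pow_eq_pow_mod q ht]
  by_cases hq : q % n = 0
  · rw [hq, pow_zero, mul_one, mul_assoc, hdd, mul_one]
    rcases L.eq_nil_or_concat with rfl | ⟨L₀, i, rfl⟩
    · exact Or.inl ⟨p, by simp⟩
    · refine Or.inr ⟨p, L₀, i, fun j hj => hL j (by simp [hj]), ?_⟩
      simp [mul_assoc]
  · refine Or.inr ⟨p, L ++ [q % n], 0, ?_, by simp [mul_assoc]⟩
    simp only [List.mem_append, List.mem_singleton]
    rintro i (hi | rfl)
    exacts [hL i hi, ⟨Nat.pos_of_ne_zero hq, Nat.mod_lt q hn⟩]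

theorem of_mem_closure (hn : 0 < n) (ht : t ^ n = 1) (hd : d ^ 2 = 1)
    (hw : w ∈ Subgroup.closure {t, d}) : IsReducedWord t d n w := by
  have ht_inv : t⁻¹ = t ^ (n - 1) := by
    rw [inv_eq_iff_mul_eq_one, ← pow_succ', Nat.sub_add_cancel hn, ht]
  have hd_inv : d⁻¹ = d := inv_eq_of_mul_eq_one_left (by rw [← sq, hd])
  induction hw using Subgroup.closure_induction_right with
  | one => exact one
  | mul_right x _ y hy hx =>
    rcases hy with rfl | rfl
    · simpa using hx.mul_pow 1
    · exact hx.mul_of_sq_eq_one hn ht hd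
  | mul_inv_cancel x _ y hy hx =>
    rcases hy with rfl | rfl
    · rw [ht_inv]; exact hx.mul_pow _
    · rw [hd_inv]; exact hx.mul_of_sq_eq_one hn ht hd

end IsReducedWord

theorem exists_conj_eq_sq_mul_blockProd_mul_sq {t d : G} (ht : t ^ 4 = 1) (hd : d ^ 2 = 1)
    (p q : ℕ) (L : List ℕ) (hL : ∀ i ∈ L, 0 < i ∧ i < 4) :
    ∃ (u : G) (L' : List ℕ), (∀ i ∈ L', 0 < i ∧ i < 4) ∧
      u * (t ^ p * blockProd d t L * d * t ^ q) * u⁻¹ = t ^ 2 * blockProd d t L' * d * t ^ 2 := by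
  obtain ⟨j, hj, hjp, hjq⟩ : ∃ j, j < 4 ∧ (j + p) % 4 ≠ 0 ∧ (q + (4 - j)) % 4 ≠ 0 := by
    by_contra! h
    have h₀ := h 0; have h₁ := h 1; have h₂ := h 2
    omega
  have hu : (t ^ 2 * d * t ^ j)⁻¹ = t ^ (4 - j) * d * t ^ 2 := by
    refine inv_eq_of_mul_eq_one_right ?_
    calc t ^ 2 * d * t ^ j * (t ^ (4 - j) * d * t ^ 2) = t ^ 2 * d * t ^ 4 * d * t ^ 2 := by
          simp only [mul_assoc]; rw [← mul_assoc (t ^ j), ← pow_add, Nat.add_sub_cancel' hj.le]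
      _ = t ^ 2 * d ^ 2 * t ^ 2 := by rw [ht, mul_one, sq d]; simp only [mul_assoc]
      _ = 1 := by rw [hd, mul_one, ← pow_add]; exact ht
  refine ⟨t ^ 2 * d * t ^ j, (j + p) % 4 :: (L ++ [(q + (4 - j)) % 4]), ?_, ?_⟩
  · simp only [List.mem_cons, List.mem_append, List.not_mem_nil, or_false]
    rintro i (rfl | hi | rfl)
    · omega
    · exact hL i hi
    · omega
  · rw [hu]
    calc t ^ 2 * d * t ^ j * (t ^ p * blockProd d t L * d * t ^ q) * (t ^ (4 - j) * d * t ^ 2)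
        = t ^ 2 * (d * t ^ (j + p)) * blockProd d t L * (d * t ^ (q + (4 - j))) * d * t ^ 2 := by
          simp only [pow_add, mul_assoc]
      _ = _ := by
          rw [pow_eq_pow_mod (j + p) ht, pow_eq_pow_mod (q + (4 - j)) ht]
          simp [mul_assoc]

end ReducedWords

section CentralQuotient

variable {G : Type*} [Group G] {g : G}

theorem Subgroup.normal_zpowers_of_mem_center (hg : g ∈ Subgroup.center G) :
    (Subgroup.zpowers g).Normal where
  conj_mem x hx y := by
    obtain ⟨k, rfl⟩ := hx
    rw [Subgroup.mem_center_iff.mp (Subgroup.zpow_mem _ hg k) y, mul_inv_cancel_right]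
    exact Subgroup.zpow_mem_zpowers g k

theorem exists_zpow_mul_eq_of_mk_eq (hg : g ∈ Subgroup.center G) [(Subgroup.zpowers g).Normal]
    {x y : G} (h : (x : G ⧸ Subgroup.zpowers g) = y) : ∃ m : ℤ, x = g ^ m * y := by
  obtain ⟨m, hm⟩ := QuotientGroup.eq.mp h.symm
  refine ⟨m, ?_⟩
  rw [← Subgroup.mem_center_iff.mp (Subgroup.zpow_mem _ hg m), show g ^ m = y⁻¹ * x from hm,
    mul_inv_cancel_left]

end CentralQuotient

theorem mk_eq_one_of_mem_braidRels {r : FreeGroup (Fin 3)} (hr : r ∈ braidRels) :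
    PresentedGroup.mk braidRels r = 1 :=
  (QuotientGroup.eq_one_iff r).mpr (Subgroup.subset_normalClosure hr)

theorem σ_braid₀₁ : σ 0 * σ 1 * σ 0 = σ 1 * σ 0 * σ 1 :=
  mul_inv_eq_one.mp (mk_eq_one_of_mem_braidRels (by simp [braidRels]))

theorem σ_braid₁₂ : σ 1 * σ 2 * σ 1 = σ 2 * σ 1 * σ 2 :=
  mul_inv_eq_one.mp (mk_eq_one_of_mem_braidRels (by simp [braidRels]))

theorem σ_commute₀₂ : Commute (σ 0) (σ 2) :=
  mul_inv_eq_one.mp (mk_eq_one_of_mem_braidRels (by simp [braidRels]))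

theorem τ_semiconjBy_σ₀ : SemiconjBy τ (σ 0) (σ 1) :=
  (semiconjBy_mul_of_braid σ_braid₀₁).mul_left σ_commute₀₂.symm

theorem τ_semiconjBy_σ₁ : SemiconjBy τ (σ 1) (σ 2) := by
  rw [τ, mul_assoc]
  exact SemiconjBy.mul_left σ_commute₀₂ (semiconjBy_mul_of_braid σ_braid₁₂)

theorem garside_mul_garside : σ 0 * σ 1 * σ 0 * (σ 1 * σ 2 * σ 1) = τ ^ 2 := by
  rw [σ_braid₁₂, τ, sq]
  simp only [mul_assoc]
  rw [σ_commute₀₂.left_comm]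

theorem τ_sq_semiconjBy_σ₂ : SemiconjBy (τ ^ 2) (σ 2) (σ 0) := by
  rw [← garside_mul_garside]
  exact (semiconjBy_garside_of_braid σ_braid₀₁).mul_left
    (semiconjBy_garside_of_braid σ_braid₁₂)

theorem θ_commute_σ₀ : Commute θ (σ 0) := by
  show Commute (τ ^ 4) (σ 0)
  have h := τ_sq_semiconjBy_σ₂.mul_left (τ_semiconjBy_σ₁.mul_left τ_semiconjBy_σ₀)
  rw [← pow_two, ← pow_add] at h
  exact h

theorem θ_mem_center : θ ∈ Subgroup.center B₄ := by
  have hτ : τ ∈ Subgroup.centralizer {θ} :=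
    Subgroup.mem_centralizer_singleton_iff.mpr ((Commute.refl τ).pow_right 4).eq
  have h₀ : σ 0 ∈ Subgroup.centralizer {θ} :=
    Subgroup.mem_centralizer_singleton_iff.mpr θ_commute_σ₀.eq.symm
  have h₁ : σ 1 ∈ Subgroup.centralizer {θ} := by
    rw [eq_mul_inv_of_mul_eq τ_semiconjBy_σ₀.eq.symm]
    exact mul_mem (mul_mem hτ h₀) (inv_mem hτ)
  have h₂ : σ 2 ∈ Subgroup.centralizer {θ} := by
    rw [eq_mul_inv_of_mul_eq τ_semiconjBy_σ₁.eq.symm]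
    exact mul_mem (mul_mem hτ h₁) (inv_mem hτ)
  have htop : Subgroup.centralizer {θ} = ⊤ := by
    rw [eq_top_iff, ← PresentedGroup.closure_range_of, Subgroup.closure_le]
    rintro _ ⟨i, rfl⟩
    fin_cases i
    exacts [h₀, h₁, h₂]
  rw [Subgroup.mem_center_iff]
  intro g
  exact Subgroup.mem_centralizer_singleton_iff.mp (htop ▸ Subgroup.mem_top g)

theorem Δ_eq_τ_mul : Δ = τ * (σ 0 * σ 1 * σ 0) := by
  simp only [Δ, τ, mul_assoc]

theorem Δ_eq_mul_τ : Δ = σ 1 * σ 2 * σ 1 * τ := by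
  rw [Δ_eq_τ_mul]
  exact (τ_semiconjBy_σ₀.mul_right τ_semiconjBy_σ₁).mul_right τ_semiconjBy_σ₀

theorem Δ_sq : Δ ^ 2 = θ := by
  calc Δ ^ 2 = τ * (σ 0 * σ 1 * σ 0 * (σ 1 * σ 2 * σ 1)) * τ := by
        nth_rw 1 [sq, Δ_eq_τ_mul]; rw [Δ_eq_mul_τ]; simp only [mul_assoc]
    _ = τ ^ 4 := by rw [garside_mul_garside]; group

theorem τ_mul_α_mul_τ : τ * α * τ = Δ := by
  simp only [α, τ, Δ, mul_assoc, inv_mul_cancel_left]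
  rw [σ_commute₀₂.eq, inv_mul_cancel_left]

theorem β_mul_τ_sq : β * τ ^ 2 = Δ := by
  apply mul_left_cancel (a := σ 0)
  calc σ 0 * (β * τ ^ 2) = τ * σ 1 * τ := by
        rw [β, ← mul_assoc, ← mul_assoc, σ_commute₀₂.eq, mul_inv_cancel_right, sq,
          ← mul_assoc, ← τ_semiconjBy_σ₁.eq]
    _ = σ 0 * Δ := by rw [Δ_eq_mul_τ]; simp only [τ, mul_assoc]

instance : (Subgroup.zpowers θ).Normal := Subgroup.normal_zpowers_of_mem_center θ_mem_center

abbrev B₄modθ : Type := B₄ ⧸ Subgroup.zpowers θ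

theorem mk_τ_pow_four : (τ : B₄modθ) ^ 4 = 1 := by
  rw [← QuotientGroup.mk_pow, QuotientGroup.eq_one_iff]
  exact Subgroup.mem_zpowers θ

theorem mk_Δ_sq : (Δ : B₄modθ) ^ 2 = 1 := by
  rw [← QuotientGroup.mk_pow, QuotientGroup.eq_one_iff, Δ_sq]
  exact Subgroup.mem_zpowers θ

theorem isReducedWord_mk_of_mem_closure {w : B₄} (hw : w ∈ Subgroup.closure {α, β}) :
    IsReducedWord (τ : B₄modθ) Δ 4 w := by
  refine IsReducedWord.of_mem_closure (by norm_num) mk_τ_pow_four mk_Δ_sq ?_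
  have hα : α = τ⁻¹ * Δ * τ⁻¹ := by rw [← τ_mul_α_mul_τ]; group
  have hβ : β = Δ * τ⁻¹ * τ⁻¹ := by rw [← β_mul_τ_sq]; group
  have hτ : (τ : B₄modθ) ∈ Subgroup.closure {(τ : B₄modθ), (Δ : B₄modθ)} :=
    Subgroup.subset_closure (by simp)
  have hΔ : (Δ : B₄modθ) ∈ Subgroup.closure {(τ : B₄modθ), (Δ : B₄modθ)} :=
    Subgroup.subset_closure (by simp)
  have hle : Subgroup.closure {α, β} ≤
      (Subgroup.closure {(τ : B₄modθ), (Δ : B₄modθ)}).comap (QuotientGroup.mk' _) := by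
    rw [Subgroup.closure_le, Set.insert_subset_iff, Set.singleton_subset_iff]
    constructor
    · rw [SetLike.mem_coe, Subgroup.mem_comap, hα, map_mul, map_mul, map_inv]
      exact mul_mem (mul_mem (inv_mem hτ) hΔ) (inv_mem hτ)
    · rw [SetLike.mem_coe, Subgroup.mem_comap, hβ, map_mul, map_mul, map_inv]
      exact mul_mem (mul_mem hΔ (inv_mem hτ)) (inv_mem hτ)
  exact hle hw

section Burau

variable (ψ : B₄ →* Matrix.GeneralLinearGroup (Fin 3) (LaurentPolynomial ℤ))
  (h₁ : (ψ (σ 0) : Matrix (Fin 3) (Fin 3) (LaurentPolynomial ℤ)) = M₁)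
  (h₂ : (ψ (σ 1) : Matrix (Fin 3) (Fin 3) (LaurentPolynomial ℤ)) = M₂)
  (h₃ : (ψ (σ 2) : Matrix (Fin 3) (Fin 3) (LaurentPolynomial ℤ)) = M₃)
include h₁ h₂ h₃

theorem det_burau_τ : (ψ τ : Matrix (Fin 3) (Fin 3) (LaurentPolynomial ℤ)).det = -T 3 := by
  have hM : M₁.det = -tt ∧ M₂.det = -tt ∧ M₃.det = -tt := by
    refine ⟨?_, ?_, ?_⟩ <;> simp [M₁, M₂, M₃, Matrix.det_fin_three]
  rw [τ, map_mul, map_mul, Units.val_mul, Units.val_mul, Matrix.det_mul, Matrix.det_mul, h₁, h₂,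
    h₃, hM.1, hM.2.1, hM.2.2, tt]
  ring_nf
  rw [T_pow]
  norm_num

theorem eq_zero_of_τ_zpow_mem_ker {N : ℤ} (hN : τ ^ N ∈ ψ.ker) : N = 0 := by
  set ev := LaurentPolynomial.eval₂ (Int.castRingHom ℚ) (Units.mk0 2 two_ne_zero)
  set χ := (Units.map ev.toMonoidHom).comp (Matrix.GeneralLinearGroup.det.comp ψ)
  have hχτ : (χ τ : ℚ) = -8 := by
    norm_num [χ, ev, Matrix.GeneralLinearGroup.val_det_apply, det_burau_τ ψ h₁ h₂ h₃]
  have h8 : (-8 : ℚ) ^ N = 1 := by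
    rw [← hχτ, ← Units.val_zpow_eq_zpow_val, ← map_zpow]
    simp [χ, MonoidHom.mem_ker.mp hN]
  have h8' : (8 : ℚ) ^ N = 1 := by
    rw [← abs_one, ← h8, abs_zpow]; norm_num
  exact (zpow_eq_one_iff_right₀ (by norm_num) (by norm_num)).mp h8'

end Burau

/-- If the kernel of the Burau representation of `B₄` is nontrivial, it contains a
non-identity element of the form `θ^m · τ² · Δτ^{i₁} ⋯ Δτ^{i_k} · Δ · τ²` with
`m ∈ ℤ` and `i₁, …, i_k ∈ {1,2,3}`. -/
theorem kernel_element_normal_form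
    (ψ : B₄ →* Matrix.GeneralLinearGroup (Fin 3) (LaurentPolynomial ℤ))
    (h₁ : (ψ (σ 0) : Matrix (Fin 3) (Fin 3) (LaurentPolynomial ℤ)) = M₁)
    (h₂ : (ψ (σ 1) : Matrix (Fin 3) (Fin 3) (LaurentPolynomial ℤ)) = M₂)
    (h₃ : (ψ (σ 2) : Matrix (Fin 3) (Fin 3) (LaurentPolynomial ℤ)) = M₃)
    (hker : ψ.ker ≤ Subgroup.closure ({α, β} : Set B₄))
    (hK : ψ.ker ≠ ⊥) :
    ∃ ω ∈ ψ.ker, ω ≠ 1 ∧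
      ∃ (m : ℤ) (l : List ℕ), (∀ i ∈ l, i = 1 ∨ i = 2 ∨ i = 3) ∧
        ω = θ ^ m * τ ^ 2 * (l.map fun i => Δ * τ ^ i).prod * Δ * τ ^ 2 := by
  obtain ⟨⟨w, hw⟩, hw_ne⟩ := Subgroup.ne_bot_iff_exists_ne_one.mp hK
  rw [ne_eq, Subgroup.mk_eq_one] at hw_ne
  rcases isReducedWord_mk_of_mem_closure (hker hw) with ⟨p, hp⟩ | ⟨p, L, q, hL, hp⟩
  · obtain ⟨m, rfl⟩ := exists_zpow_mul_eq_of_mk_eq θ_mem_center (y := τ ^ p)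
      (by rw [hp, QuotientGroup.mk_pow])
    have hτ : θ ^ m * τ ^ p = τ ^ (4 * m + p) := by
      simp only [θ]; group
    rw [hτ] at hw hw_ne
    exact absurd (by rw [eq_zero_of_τ_zpow_mem_ker ψ h₁ h₂ h₃ hw, zpow_zero]) hw_ne
  · obtain ⟨u, L', hL', hu⟩ :=
      exists_conj_eq_sq_mul_blockProd_mul_sq mk_τ_pow_four mk_Δ_sq p q L hL
    obtain ⟨u, rfl⟩ := QuotientGroup.mk_surjective u
    obtain ⟨m, hm⟩ := exists_zpow_mul_eq_of_mk_eq θ_mem_center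
      (x := u * w * u⁻¹) (y := τ ^ 2 * blockProd Δ τ L' * Δ * τ ^ 2) (by
        simp only [QuotientGroup.mk_mul, QuotientGroup.mk_inv, QuotientGroup.mk_pow,
          QuotientGroup.mk_blockProd]
        rw [hp, hu])
    refine ⟨u * w * u⁻¹, ψ.normal_ker.conj_mem w hw u, ?_, m, L', fun i hi => ?_, ?_⟩
    · simpa using hw_ne
    · have := hL' i hi; omega
    · rw [hm]; simp only [blockProd, mul_assoc]
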